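/- If two frames F₁ and F₂ are mirror-related (both are mirror reductions of a common frame), then for every formula α of L∘, α is valid on F₁ under the reflexive-insensitive semantics iff α is valid on F₂. -/
import Mathlib


/-- Formulas of the language L∘. -/
inductive RIForm : Type where
  | var : Nat → RIForm
  | neg : RIForm → RIForm
  | and : RIForm → RIForm → RIForm
  | circ : RIForm → RIForm
deriving DecidableEq

def RIForm.imp (φ ψ : RIForm) : RIForm := .neg (.and φ (.neg ψ))
def RIForm.or (φ ψ : RIForm) : RIForm := .neg (.and (.neg φ) (.neg ψ))
def RIForm.top : RIForm := .neg (.and (.var 0) (.neg (.var 0)))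
def RIForm.bot : RIForm := .and (.var 0) (.neg (.var 0))
def RIForm.iff (φ ψ : RIForm) : RIForm := .and (φ.imp ψ) (ψ.imp φ)

/-- Reflexive-insensitive satisfaction. -/
def riSat {W : Type} (R : W → W → Prop) (V : Nat → W → Prop) : W → RIForm → Prop
  | w, .var p => V p w
  | w, .neg φ => ¬ riSat R V w φ
  | w, .and φ ψ => riSat R V w φ ∧ riSat R V w ψ
  | w, .circ φ => ¬ riSat R V w φ ∨ ∀ x, R w x → riSat R V x φ

/-- Validity on a frame under the reflexive-insensitive semantics. -/
def riValid {W : Type} (R : W → W → Prop) (φ : RIForm) : Prop :=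
  ∀ V w, riSat R V w φ

/-- Rm is a mirror reduction of R. -/
def MirrorRed {W : Type} (R Rm : W → W → Prop) : Prop :=
  (∀ x y, Rm x y → R x y) ∧ (∀ x y, R x y → ¬ Rm x y → x = y)


lemma riSat_mirror {W : Type} (R Rm : W → W → Prop) (h : MirrorRed R Rm)
    (V : Nat → W → Prop) : ∀ φ w, riSat R V w φ ↔ riSat Rm V w φ := by
  intro φ
  induction φ with
  | var p => intro w; rfl
  | neg φ ih => intro w; simp [riSat, ih w]
  | and φ ψ ih1 ih2 => intro w; simp [riSat, ih1 w, ih2 w]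
  | circ φ ih =>
    intro w
    simp only [riSat, ih]
    constructor
    · rintro (h0 | hall)
      · exact Or.inl h0
      · exact Or.inr fun x hx => hall x (h.1 _ _ hx)
    · rintro (h0 | hall)
      · exact Or.inl h0
      · by_cases hw : riSat Rm V w φ
        · refine Or.inr fun x hx => ?_
          by_cases hm : Rm w x
          · exact hall x hm
          · exact (h.2 _ _ hx hm) ▸ hw
        · exact Or.inl hw

theorem mirror_related_valid {W : Type} (R R₁ R₂ : W → W → Prop)
    (h₁ : MirrorRed R R₁) (h₂ : MirrorRed R R₂) (α : RIForm) :
    riValid R₁ α ↔ riValid R₂ α := by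
  constructor <;> intro hv V w
  · exact (riSat_mirror R R₂ h₂ V α w).mp ((riSat_mirror R R₁ h₁ V α w).mpr (hv V w))
  · exact (riSat_mirror R R₁ h₁ V α w).mp ((riSat_mirror R R₂ h₂ V α w).mpr (hv V w))
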